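/- arXiv:2304.06637 — 4 statements merged into one kernel-verified Lean document; each statement's English description precedes it below -/
import Mathlib

section
/- Let q be a prime power, m ≥ 3, and c ∈ F_q. Then there exists α ∈ F_{q^m} lying in no proper subfield of F_{q^m} containing F_q (i.e. α generates F_{q^m} over F_q) with Tr_{F_{q^m}/F_q}(α) = c. Consequently there exists a monic irreducible polynomial of degree m over F_q whose coefficient of X^{m−1} is −c. -/
open Polynomial Finset

private lemma geom_aux {q : ℕ} (hq : 2 ≤ q) : ∀ k, ∑ d ∈ Finset.Icc 1 k, q ^ d < q ^ (k + 1) := by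
  intro k
  induction k with
  | zero => simpa using by positivity
  | succ n ih =>
    rw [Finset.sum_Icc_succ_top (by omega)]
    have h1 : q ^ (n + 1) + q ^ (n + 1) ≤ q ^ (n + 1 + 1) := by
      calc q ^ (n + 1) + q ^ (n + 1) = q ^ (n + 1) * 2 := by ring
        _ ≤ q ^ (n + 1) * q := Nat.mul_le_mul_left _ hq
        _ = q ^ (n + 1 + 1) := by ring
    omega

/-- In a degree `m ≥ 3` extension of finite fields `E/F`, every element `c` of `F` is
the trace of an element generating `E` over `F`; consequently there is a monic
irreducible polynomial of degree `m` over `F` whose `X^(m-1)`-coefficient is `-c`. -/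
theorem stmt_7 (F E : Type*) [Field F] [Field E] [Algebra F E] [Fintype F] [Fintype E]
    (hm : 3 ≤ Module.finrank F E) (c : F) :
    (∃ α : E, (∀ K : IntermediateField F E, α ∈ K → K = ⊤) ∧ Algebra.trace F E α = c) ∧
    ∃ f : Polynomial F, f.Monic ∧ Irreducible f ∧ f.natDegree = Module.finrank F E ∧
      f.coeff (Module.finrank F E - 1) = -c := by
  classical
  have : FiniteDimensional F E := Module.Finite.of_finite
  set m := Module.finrank F E with hm_def
  set q := Fintype.card F with hq_def
  have hq : 2 ≤ q := Fintype.one_lt_card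
  set tr := Algebra.trace F E with htr_def
  have hsurj : Function.Surjective tr := Algebra.trace_surjective F E
  -- kernel dimension
  have hker : Module.finrank F (LinearMap.ker tr) = m - 1 := by
    have h1 : Module.finrank F (LinearMap.range tr) = 1 := by
      rw [LinearMap.range_eq_top.mpr hsurj]
      simp
    have h2 := LinearMap.finrank_range_add_finrank_ker tr
    omega
  have hkercard : Fintype.card (LinearMap.ker tr) = q ^ (m - 1) := by
    rw [Module.card_eq_pow_finrank (K := F), hker]
  obtain ⟨α₀, hα₀⟩ := hsurj c
  set T : Finset E := Finset.univ.filter (fun x => tr x = c) with hT_def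
  have hT : T.card = q ^ (m - 1) := by
    have hK0 : Fintype.card (LinearMap.ker tr) =
        (Finset.univ.filter (fun x : E => tr x = 0)).card := by
      simp [← Fintype.card_subtype, LinearMap.mem_ker]
    rw [← hkercard, hK0]
    refine Finset.card_nbij' (fun x => x - α₀) (fun y => y + α₀) ?_ ?_ ?_ ?_ <;>
      intro x hx <;>
      simp only [hT_def, Finset.mem_coe, Finset.mem_filter, Finset.mem_univ, true_and, map_sub, map_add]
        at hx ⊢ <;>
      simp [hx, hα₀]
  -- the bad set
  set B : Finset E := (Finset.Icc 1 (m / 2)).biUnion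
    (fun d => Finset.univ.filter (fun x : E => x ^ q ^ d = x)) with hB_def
  have hBcard : B.card < q ^ (m - 1) := by
    have step : ∀ d ∈ Finset.Icc 1 (m / 2),
        (Finset.univ.filter (fun x : E => x ^ q ^ d = x)).card ≤ q ^ d := by
      intro d hd
      have hd1 : 1 ≤ d := (Finset.mem_Icc.mp hd).1
      have hqd : 2 ≤ q ^ d := le_trans hq (Nat.le_self_pow (by omega) q)
      set p : E[X] := X ^ (q ^ d) - X with hp_def
      have hdeg : p.natDegree = q ^ d := by
        rw [hp_def, Polynomial.natDegree_sub_eq_left_of_natDegree_lt, natDegree_X_pow]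
        rw [natDegree_X, natDegree_X_pow]
        exact hqd
      have hp0 : p ≠ 0 := by
        intro h
        rw [h, natDegree_zero] at hdeg
        exact (pow_pos (by omega : 0 < q) d).ne hdeg
      have hsub : Finset.univ.filter (fun x : E => x ^ q ^ d = x) ⊆ p.roots.toFinset := by
        intro x hx
        simp only [Finset.mem_filter] at hx
        rw [Multiset.mem_toFinset, mem_roots hp0]
        simp [hp_def, sub_eq_zero, hx.2]
      calc (Finset.univ.filter (fun x : E => x ^ q ^ d = x)).card
          ≤ p.roots.toFinset.card := Finset.card_le_card hsub
        _ ≤ Multiset.card p.roots := p.roots.toFinset_card_le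
        _ ≤ p.natDegree := p.card_roots'
        _ = q ^ d := hdeg
    calc B.card ≤ ∑ d ∈ Finset.Icc 1 (m / 2),
          (Finset.univ.filter (fun x : E => x ^ q ^ d = x)).card := Finset.card_biUnion_le
      _ ≤ ∑ d ∈ Finset.Icc 1 (m / 2), q ^ d := Finset.sum_le_sum step
      _ < q ^ (m / 2 + 1) := geom_aux hq _
      _ ≤ q ^ (m - 1) := Nat.pow_le_pow_right (by omega) (by omega)
  -- pick a good element
  have hnot : ¬ T ⊆ B := fun h => by
    have h2 := Finset.card_le_card h
    rw [hT] at h2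
    exact absurd hBcard (not_lt.mpr h2)
  obtain ⟨α, hαT, hαB⟩ := Finset.not_subset.mp hnot
  have hαtr : tr α = c := (Finset.mem_filter.mp hαT).2
  have hgen : ∀ K : IntermediateField F E, α ∈ K → K = ⊤ := by
    intro K hαK
    by_contra hKtop
    have : FiniteDimensional F K := Module.Finite.of_finite
    set d := Module.finrank F K with hd_def
    have hdvd : d ∣ m := ⟨Module.finrank K E, (Module.finrank_mul_finrank F K E).symm⟩
    have hd1 : 1 ≤ d := Module.finrank_pos
    have hdm : d ≠ m := by
      intro h
      exact hKtop (IntermediateField.eq_of_le_of_finrank_eq le_top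
        (by rw [IntermediateField.finrank_top']; exact h))
    have hdle : d ≤ m / 2 := by
      obtain ⟨k, hk⟩ := hdvd
      rcases Nat.lt_or_ge k 2 with h | h
      · interval_cases k <;> omega
      · have : d * 2 ≤ d * k := Nat.mul_le_mul_left d h
        omega
    have hcardK : Fintype.card K = q ^ d := Module.card_eq_pow_finrank (K := F)
    have hpow : α ^ q ^ d = α := by
      have := FiniteField.pow_card (⟨α, hαK⟩ : K)
      rw [hcardK] at this
      have := congrArg (Subtype.val) this
      simpa using this
    exact hαB (Finset.mem_biUnion.mpr ⟨d, Finset.mem_Icc.mpr ⟨hd1, hdle⟩,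
      Finset.mem_filter.mpr ⟨Finset.mem_univ _, hpow⟩⟩)
  refine ⟨⟨α, hgen, hαtr⟩, ?_⟩
  -- the polynomial part
  have hint : IsIntegral F α := IsIntegral.of_finite F α
  have htop : IntermediateField.adjoin F {α} = ⊤ :=
    hgen _ (IntermediateField.mem_adjoin_simple_self F α)
  have hdeg : (minpoly F α).natDegree = m := by
    have h1 := IntermediateField.adjoin.finrank hint
    rw [htop, IntermediateField.finrank_top'] at h1
    exact h1.symm
  have hdegpos : 0 < (minpoly F α).natDegree := by omega
  -- power basis of E generated by α
  let e : (IntermediateField.adjoin F {α}) ≃ₐ[F] E :=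
    (IntermediateField.equivOfEq htop).trans IntermediateField.topEquiv
  let pb : PowerBasis F E := (IntermediateField.adjoin.powerBasis hint).map e
  have hgen_eq : pb.gen = α := by
    simp [pb, e, PowerBasis.map_gen, IntermediateField.adjoin.powerBasis_gen]
  have htrace := pb.trace_gen_eq_nextCoeff_minpoly
  rw [hgen_eq] at htrace
  have hnext : (minpoly F α).nextCoeff = (minpoly F α).coeff (m - 1) := by
    rw [Polynomial.nextCoeff_of_natDegree_pos hdegpos, hdeg]
  refine ⟨minpoly F α, minpoly.monic hint, minpoly.irreducible hint, hdeg, ?_⟩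
  have : c = -(minpoly F α).nextCoeff := by rw [← hαtr, htr_def, htrace]
  rw [← hnext]
  rw [this, neg_neg]
end

section
/- Let q be a power of an odd prime, m ≥ 1, and c ∈ F_q. Then there exists a monic irreducible polynomial f ∈ F_q[X] of degree m of the form f = X^m − c·X^{m−1} + (lower order terms), i.e. with coefficient of X^{m−1} equal to −c. -/
open Polynomial Module IntermediateField

noncomputable section Stmt9Aux

/-- Geometric sum bound. -/
private lemma stmt9_geom_lt {q : ℕ} (hq : 2 ≤ q) (k : ℕ) :
    ∑ i ∈ Finset.range k, q ^ i < q ^ k := by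
  induction k with
  | zero => simp
  | succ k ih =>
    rw [Finset.sum_range_succ, pow_succ]
    have h1 : q ^ k * 2 ≤ q ^ k * q := Nat.mul_le_mul_left _ hq
    omega

/-- The number of solutions of `x ^ n = x` in a field is at most `n`. -/
private lemma stmt9_card_pow_fixed (E : Type*) [Field E] [Fintype E] [DecidableEq E]
    {n : ℕ} (hn : 1 < n) :
    (Finset.univ.filter fun x : E => x ^ n = x).card ≤ n := by
  have hne : (X ^ n - X : E[X]) ≠ 0 := FiniteField.X_pow_card_sub_X_ne_zero E hn
  have hsub : (Finset.univ.filter fun x : E => x ^ n = x) ⊆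
      (X ^ n - X : E[X]).roots.toFinset := by
    intro x hx
    simp only [Finset.mem_filter] at hx
    rw [Multiset.mem_toFinset, mem_roots hne]
    simp [IsRoot, sub_eq_zero, hx.2]
  calc (Finset.univ.filter fun x : E => x ^ n = x).card
      ≤ (X ^ n - X : E[X]).roots.toFinset.card := Finset.card_le_card hsub
    _ ≤ Multiset.card (X ^ n - X : E[X]).roots := Multiset.toFinset_card_le _
    _ ≤ (X ^ n - X : E[X]).natDegree := card_roots' _
    _ = n := FiniteField.X_pow_card_sub_X_natDegree_eq E hn

/-- If `x ^ q = x` with `q = #F`, then `x` is in the image of `F`. -/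
private lemma stmt9_mem_range_of_pow_card (F E : Type*) [Field F] [Fintype F]
    [Field E] [Fintype E] [Algebra F E]
    {x : E} (hx : x ^ Fintype.card F = x) : x ∈ (algebraMap F E).range := by
  classical
  set q := Fintype.card F with hq
  have hq2 : 1 < q := Fintype.one_lt_card
  set R := Finset.univ.filter fun y : E => y ^ q = y with hR
  set I := Finset.univ.image (algebraMap F E) with hI
  have hsub : I ⊆ R := by
    intro y hy
    simp only [hI, Finset.mem_image] at hy
    obtain ⟨a, -, rfl⟩ := hy
    simp only [hR, Finset.mem_filter, Finset.mem_univ, true_and]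
    rw [← map_pow, FiniteField.pow_card]
  have hcardI : I.card = q := by
    rw [hI, Finset.card_image_of_injective _ (algebraMap F E).injective, Finset.card_univ]
  have hIR : I = R := by
    refine Finset.eq_of_subset_of_card_le hsub ?_
    rw [hcardI]
    exact stmt9_card_pow_fixed E hq2
  have hxR : x ∈ R := by simp [hR, hx]
  rw [← hIR] at hxR
  simp only [hI, Finset.mem_image] at hxR
  obtain ⟨a, -, ha⟩ := hxR
  exact ⟨a, ha⟩

/-- The extension of `F` of degree `m`. -/
private def Stmt9Ext (F : Type*) [Field F] [Fintype F] (m : ℕ) : Type _ :=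
  Polynomial.SplittingField (X ^ (Fintype.card F) ^ m - X : F[X])

noncomputable instance (F : Type*) [Field F] [Fintype F] (m : ℕ) : Field (Stmt9Ext F m) :=
  inferInstanceAs (Field (Polynomial.SplittingField _))

noncomputable instance (F : Type*) [Field F] [Fintype F] (m : ℕ) : Algebra F (Stmt9Ext F m) :=
  inferInstanceAs (Algebra F (Polynomial.SplittingField _))

instance (F : Type*) [Field F] [Fintype F] (m : ℕ) : FiniteDimensional F (Stmt9Ext F m) := by
  unfold Stmt9Ext; exact (inferInstance : FiniteDimensional F (Polynomial.SplittingField (X ^ (Fintype.card F) ^ m - X : F[X])))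

instance (F : Type*) [Field F] [Fintype F] (m : ℕ) : Finite (Stmt9Ext F m) :=
  Module.finite_of_finite F

private lemma stmt9_finrank_Ext (F : Type*) [Field F] [Fintype F]
    (p : ℕ) [Fact p.Prime] [CharP F p] (m : ℕ) (hm : m ≠ 0) :
    finrank F (Stmt9Ext F m) = m := by
  classical
  set q := Fintype.card F with hq
  have hq2 : 1 < q := Fintype.one_lt_card
  set E := Stmt9Ext F m with hE
  haveI : Fintype E := Fintype.ofFinite E
  obtain ⟨n, hpp, hcard⟩ := FiniteField.card F p
  haveI : CharP E p := charP_of_injective_algebraMap (algebraMap F E).injective p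
  haveI : ExpChar E p := ExpChar.prime hpp
  have hqm : q ^ m = p ^ ((n : ℕ) * m) := by rw [hq, hcard, ← pow_mul]
  have hsplits : Splits ((X ^ q ^ m - X : F[X]).map (algebraMap F E)) :=
    Polynomial.SplittingField.splits _
  have hsep : (X ^ q ^ m - X : F[X]).Separable := by
    apply galois_poly_separable p (q ^ m)
    rw [hqm]
    exact dvd_pow_self p (by positivity)
  have hne : (X ^ q ^ m - X : F[X]) ≠ 0 :=
    FiniteField.X_pow_card_sub_X_ne_zero F (Nat.one_lt_pow hm hq2)
  -- the Frobenius `x ↦ x ^ q ^ m` as an `F`-algebra endomorphism of `E`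
  have hfrob : ∀ x : E, x ^ q ^ m = iterateFrobenius E p ((n : ℕ) * m) x := by
    intro x
    rw [iterateFrobenius_def, hqm]
  let φ : E →ₐ[F] E :=
    { toRingHom := iterateFrobenius E p ((n : ℕ) * m)
      commutes' := by
        intro a
        show iterateFrobenius E p ((n : ℕ) * m) ((algebraMap F E) a) = (algebraMap F E) a
        rw [← hfrob, ← map_pow, FiniteField.pow_card_pow] }
  -- every element of `E` is a root of `X ^ q ^ m - X`
  have huniv : ∀ x : E, x ^ q ^ m = x := by
    have htop : AlgHom.equalizer φ (AlgHom.id F E) = ⊤ := by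
      have hadj : Algebra.adjoin F ((X ^ q ^ m - X : F[X]).rootSet E) = ⊤ :=
        Polynomial.SplittingField.adjoin_rootSet (X ^ q ^ m - X : F[X])
      refine eq_top_iff.mpr (le_trans (le_of_eq hadj.symm) ?_)
      apply Algebra.adjoin_le
      intro x hx
      rw [mem_rootSet_of_ne hne] at hx
      have : x ^ q ^ m - x = 0 := by simpa using hx
      show φ x = x
      have := sub_eq_zero.mp this
      simpa [φ, ← hfrob] using this
    intro x
    have hx : x ∈ AlgHom.equalizer φ (AlgHom.id F E) := htop ▸ trivial
    have : φ x = x := hx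
    rwa [show φ x = x ^ q ^ m by simp [φ, ← hfrob]] at this
  have hroot : (X ^ q ^ m - X : F[X]).rootSet E = Set.univ := by
    rw [Set.eq_univ_iff_forall]
    intro x
    rw [mem_rootSet_of_ne hne]
    simp [sub_eq_zero, huniv x]
  have key : Fintype.card ((X ^ q ^ m - X : F[X]).rootSet E) =
      (X ^ q ^ m - X : F[X]).natDegree :=
    card_rootSet_eq_natDegree hsep hsplits
  rw [FiniteField.X_pow_card_pow_sub_X_natDegree_eq F hm hq2] at key
  have hcardE : Fintype.card E = q ^ m := by
    rw [← key]
    exact Fintype.card_congr ((Equiv.Set.univ E).symm.trans (Equiv.setCongr hroot.symm))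
  have h2 := card_eq_pow_finrank (K := F) (V := E)
  rw [hcardE, ← hq] at h2
  exact (Nat.pow_right_injective hq2 h2.symm)


/-- The trace fiber over `c` has exactly `q ^ (finrank - 1)` elements. -/
private lemma stmt9_card_fiber (F E : Type*) [Field F] [Fintype F] [Field E] [Fintype E]
    [DecidableEq E] [Algebra F E] [FiniteDimensional F E] (c : F)
    [DecidablePred fun x : E => Algebra.trace F E x = c] :
    (Finset.univ.filter fun x : E => Algebra.trace F E x = c).card
      = Fintype.card F ^ (finrank F E - 1) := by
  classical
  haveI := Algebra.IsAlgebraic.of_finite F E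
  have hsurj := Algebra.trace_surjective F E
  obtain ⟨x0, hx0⟩ := hsurj c
  have hker : finrank F (LinearMap.ker (Algebra.trace F E)) = finrank F E - 1 := by
    have h := LinearMap.finrank_range_add_finrank_ker (Algebra.trace F E)
    rw [LinearMap.range_eq_top.mpr hsurj, finrank_top, finrank_self] at h
    omega
  have e : {x : E // Algebra.trace F E x = c} ≃ LinearMap.ker (Algebra.trace F E) :=
    { toFun := fun x => ⟨x.1 - x0, by simp [LinearMap.mem_ker, map_sub, x.2, hx0]⟩
      invFun := fun y => ⟨y.1 + x0, by
        have hy := (LinearMap.mem_ker).mp y.2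
        simp [map_add, hy, hx0]⟩
      left_inv := fun x => by ext; simp
      right_inv := fun y => by ext; simp }
  rw [← Fintype.card_subtype, Fintype.card_congr e, card_eq_pow_finrank (K := F), hker]

/-- An element not fixed by any proper-divisor power of Frobenius is primitive. -/
private lemma stmt9_primitive (F : Type*) {E : Type*} [Field F] [Fintype F] [Field E]
    [Algebra F E] [FiniteDimensional F E] {m : ℕ} (hfr : finrank F E = m) (hm : m ≠ 0)
    (x : E) (h : ∀ d, d ∣ m → d < m → x ^ (Fintype.card F) ^ d ≠ x) : F⟮x⟯ = ⊤ := by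
  classical
  have hint : IsIntegral F x := .of_finite F x
  set d := finrank F F⟮x⟯ with hd
  have hdvd : d ∣ m := by
    rw [← hfr]
    exact ⟨finrank F⟮x⟯ E, (Module.finrank_mul_finrank F F⟮x⟯ E).symm⟩
  have hdm : d = m := by
    by_contra hne
    have hlt : d < m := lt_of_le_of_ne (Nat.le_of_dvd (Nat.pos_of_ne_zero hm) hdvd) hne
    haveI : Finite F⟮x⟯ := Module.finite_of_finite F
    haveI : Fintype F⟮x⟯ := Fintype.ofFinite _
    have hcardK : Fintype.card F⟮x⟯ = Fintype.card F ^ d := card_eq_pow_finrank (K := F)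
    have hxK := FiniteField.pow_card (⟨x, mem_adjoin_simple_self F x⟩ : F⟮x⟯)
    rw [hcardK] at hxK
    apply h d hdvd hlt
    have h2 := congrArg (Subtype.val) hxK
    simpa using h2
  rw [Field.primitive_element_iff_minpoly_natDegree_eq, ← IntermediateField.adjoin.finrank hint,
    ← hd, hdm, hfr]

end Stmt9Aux

/-- Over a finite field of odd characteristic, for every `c` and every `m ≥ 1` there
exists a monic irreducible polynomial of degree `m` whose `X^(m-1)`-coefficient is
`-c`. -/
theorem stmt_9 (F : Type*) [Field F] [Fintype F]
    (p : ℕ) [Fact p.Prime] [CharP F p] (hp : p ≠ 2)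
    (m : ℕ) (hm : 1 ≤ m) (c : F) :
    ∃ f : Polynomial F, f.Monic ∧ Irreducible f ∧ f.natDegree = m ∧
      f.coeff (m - 1) = -c := by
  classical
  rcases eq_or_lt_of_le hm with h1 | h2
  · subst h1
    exact ⟨X - C c, monic_X_sub_C c, irreducible_X_sub_C c, natDegree_X_sub_C c, by simp⟩
  · set q := Fintype.card F with hq
    have hq2 : 1 < q := Fintype.one_lt_card
    set E := Stmt9Ext F m with hE
    haveI : Fintype E := Fintype.ofFinite E
    have hfr : finrank F E = m := stmt9_finrank_Ext F p m (by omega)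
    have hfib := stmt9_card_fiber F E c
    rw [hfr, ← hq] at hfib
    set fiber := Finset.univ.filter (fun x : E => Algebra.trace F E x = c) with hfiber
    have hex : ∃ x ∈ fiber, ∀ d, d ∣ m → d < m → x ^ q ^ d ≠ x := by
      rcases eq_or_lt_of_le (show 2 ≤ m from h2) with h3 | h4
      · -- m = 2
        set bad := fiber.filter (fun x : E => x ^ q = x) with hbad
        have h2ne : (2 : F) ≠ 0 := by
          intro hc
          have h2' : ((2 : ℕ) : F) = 0 := by exact_mod_cast hc
          have := (CharP.cast_eq_zero_iff F p 2).mp h2'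
          exact hp ((Nat.prime_dvd_prime_iff_eq (Fact.out) Nat.prime_two).mp this)
        have hbad1 : bad.card ≤ 1 := by
          rw [Finset.card_le_one]
          intro a ha b hb
          simp only [hbad, hfiber, Finset.mem_filter, Finset.mem_univ, true_and] at ha hb
          obtain ⟨a', ha'⟩ := stmt9_mem_range_of_pow_card F E ha.2
          obtain ⟨b', hb'⟩ := stmt9_mem_range_of_pow_card F E hb.2
          have hta : (m : F) * a' = c := by
            rw [← ha.1, ← ha', Algebra.trace_algebraMap, hfr, nsmul_eq_mul]
          have htb : (m : F) * b' = c := by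
            rw [← hb.1, ← hb', Algebra.trace_algebraMap, hfr, nsmul_eq_mul]
          have hm2 : ((m : ℕ) : F) = (2 : F) := by rw [← h3]; norm_num
          rw [hm2] at hta htb
          have : a' = b' := mul_left_cancel₀ h2ne (hta.trans htb.symm)
          rw [← ha', ← hb', this]
        have hlt : bad.card < fiber.card := by
          rw [hfib, ← h3]
          exact lt_of_le_of_lt hbad1 (by simpa using hq2)
        obtain ⟨x, hxf, hxb⟩ : ∃ x ∈ fiber, x ∉ bad := by
          by_contra hcon
          push_neg at hcon
          exact absurd (Finset.card_le_card fun y hy => hcon y hy) (not_le_of_gt hlt)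
        refine ⟨x, hxf, fun d hd hdm => ?_⟩
        have hd1 : d = 1 := by
          have := Nat.pos_of_dvd_of_pos hd (by omega)
          omega
        rw [hd1, pow_one]
        intro hxq
        exact hxb (by simp [hbad, hxf, hxq])
      · -- m ≥ 3
        set bad := (m.properDivisors).biUnion
          (fun d => Finset.univ.filter fun x : E => x ^ q ^ d = x) with hbad
        have hbadcard : bad.card < q ^ (m - 1) := by
          calc bad.card
              ≤ ∑ d ∈ m.properDivisors,
                (Finset.univ.filter fun x : E => x ^ q ^ d = x).card :=
                Finset.card_biUnion_le
            _ ≤ ∑ d ∈ m.properDivisors, q ^ d := by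
                refine Finset.sum_le_sum fun d hd => ?_
                have hd' := Nat.mem_properDivisors.mp hd
                have hd0 : d ≠ 0 := by
                  rintro rfl
                  exact absurd (Nat.eq_zero_of_zero_dvd hd'.1) (by omega)
                exact stmt9_card_pow_fixed E (Nat.one_lt_pow hd0 hq2)
            _ ≤ ∑ d ∈ Finset.range (m - 1), q ^ d := by
                refine Finset.sum_le_sum_of_subset fun d hd => ?_
                rw [Finset.mem_range]
                have hd' := Nat.mem_properDivisors.mp hd
                obtain ⟨k, hk⟩ := hd'.1
                have hd0 : d ≠ 0 := by
                  rintro rfl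
                  omega
                have hk2 : 2 ≤ k := by
                  rcases Nat.lt_or_ge k 2 with hk' | hk'
                  · interval_cases k <;> omega
                  · exact hk'
                have h2d : 2 * d ≤ m := by
                  calc 2 * d = d * 2 := by ring
                    _ ≤ d * k := Nat.mul_le_mul_left d hk2
                    _ = m := hk.symm
                omega
            _ < q ^ (m - 1) := stmt9_geom_lt hq2 _
        have hlt : bad.card < fiber.card := by rw [hfib]; exact hbadcard
        obtain ⟨x, hxf, hxb⟩ : ∃ x ∈ fiber, x ∉ bad := by
          by_contra hcon
          push_neg at hcon
          exact absurd (Finset.card_le_card fun y hy => hcon y hy) (not_le_of_gt hlt)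
        refine ⟨x, hxf, fun d hd hdm hxq => ?_⟩
        exact hxb (Finset.mem_biUnion.mpr ⟨d, Nat.mem_properDivisors.mpr ⟨hd, hdm⟩,
          by simp [hxq]⟩)
    obtain ⟨x, hxf, hxd⟩ := hex
    have hxc : Algebra.trace F E x = c := (Finset.mem_filter.mp hxf).2
    have htop : F⟮x⟯ = ⊤ := stmt9_primitive F hfr (by omega) x hxd
    have hint : IsIntegral F x := .of_finite F x
    have hdeg : (minpoly F x).natDegree = m :=
      ((Field.primitive_element_iff_minpoly_natDegree_eq F x).mp htop).trans hfr
    let e : F⟮x⟯ ≃ₐ[F] E := (IntermediateField.equivOfEq htop).trans IntermediateField.topEquiv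
    let pb : PowerBasis F E := (IntermediateField.adjoin.powerBasis hint).map e
    have hgen : pb.gen = x := by
      simp [pb, e, IntermediateField.adjoin.powerBasis]
    have htr := PowerBasis.trace_gen_eq_nextCoeff_minpoly pb
    rw [hgen, hxc] at htr
    refine ⟨minpoly F x, minpoly.monic hint, minpoly.irreducible hint, hdeg, ?_⟩
    have hnext : (minpoly F x).nextCoeff = (minpoly F x).coeff (m - 1) := by
      rw [nextCoeff_of_natDegree_pos (by rw [hdeg]; omega), hdeg]
    rw [← hnext]
    have h3 := congrArg Neg.neg htr
    simpa using h3.symm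
end

section
/- Let F_q be a finite field of odd characteristic with q ≥ n(n−1)/2, and let (n_1, …, n_r) be a tuple of positive integers with n_1 + ⋯ + n_r = n. Then there exists a monic polynomial f ∈ F_q[X] of degree n such that: (1) f is a product of r pairwise distinct monic irreducible polynomials of degrees n_1, …, n_r respectively (in particular f is squarefree and has n distinct roots in an algebraic closure); (2) the coefficient of X^{n−1} in f is 0 (equivalently, the sum of the roots of f is 0). -/
open Polynomial Module IntermediateField

private lemma geom_lt' {q : ℕ} (hq : 2 ≤ q) : ∀ m : ℕ, ∑ e ∈ Finset.range m, q ^ e < q ^ m := by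
  intro m
  induction m with
  | zero => simp
  | succ k ih =>
    rw [Finset.sum_range_succ, pow_succ]
    have h1 : 1 ≤ q ^ k := Nat.one_le_pow _ _ (by omega)
    have : q ^ k * 2 ≤ q ^ k * q := Nat.mul_le_mul_left _ hq
    omega

private lemma pow_card_pow_minpoly {F L : Type*} [Field F] [Fintype F] [Field L] [Algebra F L]
    [FiniteDimensional F L] (α : L) :
    α ^ (Fintype.card F) ^ (minpoly F α).natDegree = α := by
  have hint : IsIntegral F α := IsIntegral.of_finite F α
  have hfr : finrank F F⟮α⟯ = (minpoly F α).natDegree := IntermediateField.adjoin.finrank hint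
  letI : Fintype F⟮α⟯ := Module.fintypeOfFintype (Module.finBasis F F⟮α⟯)
  have hcard : Fintype.card F⟮α⟯ = Fintype.card F ^ (minpoly F α).natDegree := by
    have h := Module.card_fintype (Module.finBasis F F⟮α⟯)
    rwa [Fintype.card_fin, hfr] at h
  have h2 := FiniteField.pow_card (IntermediateField.AdjoinSimple.gen F α)
  rw [hcard] at h2
  have h3 := congrArg (algebraMap F⟮α⟯ L) h2
  rwa [map_pow, IntermediateField.AdjoinSimple.algebraMap_gen] at h3

private lemma minpoly_natDegree_dvd {F L : Type*} [Field F] [Field L] [Algebra F L]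
    [FiniteDimensional F L] (α : L) : (minpoly F α).natDegree ∣ finrank F L := by
  have hint : IsIntegral F α := IsIntegral.of_finite F α
  have hfr : finrank F F⟮α⟯ = (minpoly F α).natDegree := IntermediateField.adjoin.finrank hint
  exact ⟨finrank F⟮α⟯ L, by rw [← hfr, Module.finrank_mul_finrank]⟩

/-- Existence of a monic irreducible polynomial of degree `d` with prescribed next
coefficient, over a finite field of odd characteristic. -/
private lemma exists_irred (F : Type*) [Field F] [Fintype F]
    (p : ℕ) [Fact p.Prime] [CharP F p] (hp : p ≠ 2) (d : ℕ) (hd : 0 < d) (a : F) :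
    ∃ g : Polynomial F, g.Monic ∧ Irreducible g ∧ g.natDegree = d ∧ g.nextCoeff = a := by
  classical
  rcases eq_or_lt_of_le (show 1 ≤ d from hd) with h1 | hd2
  · refine ⟨X - C (-a), monic_X_sub_C _, irreducible_X_sub_C _, by rw [natDegree_X_sub_C, ← h1],
      by rw [nextCoeff_X_sub_C, neg_neg]⟩
  obtain ⟨k, hpk, hcard⟩ := FiniteField.card F p
  have hq2 : 2 ≤ Fintype.card F := Fintype.one_lt_card
  set q := Fintype.card F with hqdef
  have hdvd : p ∣ q ^ d := by
    rw [hcard, ← pow_mul]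
    exact dvd_pow_self p (by positivity)
  set φ : Polynomial F := X ^ q ^ d - X with hφ
  have hd0 : d ≠ 0 := by omega
  have hφdeg : φ.natDegree = q ^ d := FiniteField.X_pow_card_pow_sub_X_natDegree_eq F hd0 hq2
  have hsep : φ.Separable := galois_poly_separable p (q ^ d) hdvd
  set L := φ.SplittingField with hL
  letI : Fintype L := Module.fintypeOfFintype (Module.finBasis F L)
  haveI : CharP L p := charP_of_injective_algebraMap (algebraMap F L).injective p
  have hqd_pk : q ^ d = p ^ ((k : ℕ) * d) := by rw [hcard, ← pow_mul]
  -- every element of L satisfies x ^ q ^ d = x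
  have hfix : ∀ x : L, x ^ q ^ d = x := by
    set S : Subalgebra F L :=
      { carrier := {x : L | x ^ q ^ d = x}
        mul_mem' := fun {x y} hx hy => by
          simp only [Set.mem_setOf_eq] at *
          rw [mul_pow, hx, hy]
        add_mem' := fun {x y} hx hy => by
          simp only [Set.mem_setOf_eq] at *
          rw [hqd_pk] at hx hy ⊢
          rw [add_pow_char_pow, hx, hy]
        one_mem' := by simp
        zero_mem' := by
          simp only [Set.mem_setOf_eq]
          exact zero_pow (by positivity)
        algebraMap_mem' := fun c => by
          have hc : c ^ q ^ d = c := by rw [hqdef]; exact FiniteField.pow_card_pow d c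
          simp only [Set.mem_setOf_eq, ← map_pow, hc] } with hS
    have htop : S = ⊤ := by
      rw [← top_le_iff, ← Polynomial.IsSplittingField.adjoin_rootSet L φ]
      apply Algebra.adjoin_le
      intro x hx
      rw [Polynomial.mem_rootSet] at hx
      have h := hx.2
      simp only [hφ, map_sub, map_pow, aeval_X, sub_eq_zero] at h
      exact h
    intro x
    have hx : x ∈ S := htop ▸ Algebra.mem_top
    exact hx
  -- counting roots of x ^ q ^ e = x
  have hroots_bound : ∀ (e : ℕ), e ≠ 0 →
      (Finset.univ.filter fun x : L => x ^ q ^ e = x).card ≤ q ^ e := by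
    intro e he
    have hne : (X ^ q ^ e - X : L[X]) ≠ 0 := FiniteField.X_pow_card_pow_sub_X_ne_zero L he hq2
    have hdeg : (X ^ q ^ e - X : L[X]).natDegree = q ^ e :=
      FiniteField.X_pow_card_pow_sub_X_natDegree_eq L he hq2
    have hsub : (Finset.univ.filter fun x : L => x ^ q ^ e = x) ⊆
        (X ^ q ^ e - X : L[X]).roots.toFinset := by
      intro x hx
      rw [Finset.mem_filter] at hx
      rw [Multiset.mem_toFinset, Polynomial.mem_roots']
      exact ⟨hne, by simp [Polynomial.IsRoot, hx.2]⟩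
    calc (Finset.univ.filter fun x : L => x ^ q ^ e = x).card
        ≤ (X ^ q ^ e - X : L[X]).roots.toFinset.card := Finset.card_le_card hsub
      _ ≤ Multiset.card (X ^ q ^ e - X : L[X]).roots := Multiset.toFinset_card_le _
      _ ≤ (X ^ q ^ e - X : L[X]).natDegree := Polynomial.card_roots' _
      _ = q ^ e := hdeg
  have hcardL : Fintype.card L = q ^ d := by
    apply le_antisymm
    · have huniv : (Finset.univ : Finset L) = Finset.univ.filter fun x : L => x ^ q ^ d = x := by
        ext x; simp [hfix x]
      calc Fintype.card L = (Finset.univ : Finset L).card := (Finset.card_univ).symm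
        _ ≤ q ^ d := by rw [huniv]; exact hroots_bound d hd0
    · have h1 : Fintype.card (φ.rootSet L) = q ^ d := by
        rw [Polynomial.card_rootSet_eq_natDegree hsep (Polynomial.SplittingField.splits φ), hφdeg]
      rw [← h1]
      exact Fintype.card_le_of_injective _ Subtype.val_injective
  have hfrL : finrank F L = d := by
    have h := Module.card_fintype (Module.finBasis F L)
    rw [Fintype.card_fin, hcardL] at h
    exact Nat.pow_right_injective hq2 h.symm
  -- trace fibers
  haveI : Algebra.IsSeparable F L := IsGalois.to_isSeparable
  have hTsurj : Function.Surjective (Algebra.trace F L) := Algebra.trace_surjective F L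
  set T := Algebra.trace F L with hT
  letI : Fintype (LinearMap.ker T) := Fintype.ofFinite _
  have hkercard : (Finset.univ.filter fun x : L => T x = 0).card = q ^ (d - 1) := by
    have h1 : finrank F (LinearMap.ker T) = d - 1 := by
      have h2 := LinearMap.finrank_range_add_finrank_ker T
      rw [LinearMap.range_eq_top.mpr hTsurj, finrank_top, finrank_self, hfrL] at h2
      omega
    have hcardker : Fintype.card (LinearMap.ker T) = q ^ (d - 1) := by
      have h := Module.card_fintype (Module.finBasis F (LinearMap.ker T))
      rwa [Fintype.card_fin, h1] at h
    rw [← Fintype.card_subtype, ← hcardker]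
    exact Fintype.card_congr ((Equiv.subtypeEquivRight fun x => by
      simp [LinearMap.mem_ker]).symm)
  have hfiber : ∀ t : F, (Finset.univ.filter fun x : L => T x = t).card = q ^ (d - 1) := by
    intro t
    obtain ⟨x0, hx0⟩ := hTsurj t
    rw [← hkercard]
    refine Finset.card_bij' (fun x _ => x - x0) (fun y _ => y + x0) ?_ ?_ ?_ ?_
    · intro x hx
      rw [Finset.mem_filter] at hx ⊢
      exact ⟨Finset.mem_univ _, by rw [map_sub, hx.2, hx0, sub_self]⟩
    · intro y hy
      rw [Finset.mem_filter] at hy ⊢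
      exact ⟨Finset.mem_univ _, by rw [map_add, hy.2, hx0, zero_add]⟩
    · intro x _; ring
    · intro y _; ring
  -- find a generator with trace -a
  obtain ⟨α, hαt, hαdeg⟩ : ∃ α : L, T α = -a ∧ (minpoly F α).natDegree = d := by
    by_cases hd3 : d = 2
    · -- degree 2 case
      have hfib2 : (Finset.univ.filter fun x : L => T x = -a).card = q := by
        rw [hfiber (-a), hd3, pow_one]
      set B : Finset L := Finset.univ.filter fun x : L => x ^ q = x with hB
      have himg : (Finset.univ.image (algebraMap F L)) ⊆ B := by
        intro x hx
        rw [Finset.mem_image] at hx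
        obtain ⟨c, _, rfl⟩ := hx
        rw [hB, Finset.mem_filter]
        refine ⟨Finset.mem_univ _, ?_⟩
        have hc : c ^ q = c := by rw [hqdef]; exact FiniteField.pow_card c
        rw [← map_pow, hc]
      have hBcard : B.card ≤ q := by
        have h := hroots_bound 1 one_ne_zero
        simp only [pow_one] at h
        simpa [hB] using h
      have hBeq : Finset.univ.image (algebraMap F L) = B := by
        apply Finset.eq_of_subset_of_card_le himg
        rw [Finset.card_image_of_injective _ (algebraMap F L).injective, Finset.card_univ]
        exact hBcard
      have h2F : (2 : F) ≠ 0 := by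
        have hp2 : ¬ (p ∣ 2) := by
          intro hdvd2
          exact hp ((Nat.prime_dvd_prime_iff_eq (Fact.out) Nat.prime_two).mp hdvd2)
        have := (CharP.cast_eq_zero_iff F p 2).not.mpr hp2
        simpa using this
      have hone : ∀ x ∈ B, ∀ y ∈ B, T x = -a → T y = -a → x = y := by
        intro x hx y hy hxt hyt
        rw [← hBeq, Finset.mem_image] at hx hy
        obtain ⟨c, _, rfl⟩ := hx
        obtain ⟨c', _, rfl⟩ := hy
        rw [hT, Algebra.trace_algebraMap, hfrL] at hxt hyt
        have hcc : (2 : F) * c = (2 : F) * c' := by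
          have h1 : (d : F) * c = -a := by
            rw [← hxt, nsmul_eq_mul]
          have h2 : (d : F) * c' = -a := by
            rw [← hyt, nsmul_eq_mul]
          rw [hd3] at h1 h2
          push_cast at h1 h2
          rw [h1, h2]
        exact congrArg _ (mul_left_cancel₀ h2F hcc)
      have hex : ∃ α ∈ (Finset.univ.filter fun x : L => T x = -a), α ∉ B := by
        by_contra hcon
        push_neg at hcon
        have hle1 : (Finset.univ.filter fun x : L => T x = -a).card ≤ 1 := by
          apply Finset.card_le_one.mpr
          intro x hx y hy
          rw [Finset.mem_filter] at hx hy
          exact hone x (hcon x (Finset.mem_filter.mpr hx)) y (hcon y (Finset.mem_filter.mpr hy))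
            hx.2 hy.2
        omega
      obtain ⟨α, hαfib, hαB⟩ := hex
      have hint : IsIntegral F α := IsIntegral.of_finite F α
      have hdvd2 : (minpoly F α).natDegree ∣ 2 := by
        have h := minpoly_natDegree_dvd (F := F) α
        rwa [hfrL, hd3] at h
      have hne1 : (minpoly F α).natDegree ≠ 1 := by
        intro h1
        obtain ⟨c, hc⟩ := minpoly.natDegree_eq_one_iff.mp h1
        apply hαB
        rw [hB, Finset.mem_filter]
        refine ⟨Finset.mem_univ _, ?_⟩
        have hcq : c ^ q = c := by rw [hqdef]; exact FiniteField.pow_card c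
        rw [← hc, ← map_pow, hcq]
      have hpos := minpoly.natDegree_pos hint
      refine ⟨α, (Finset.mem_filter.mp hαfib).2, ?_⟩
      rcases (Nat.dvd_prime Nat.prime_two).mp hdvd2 with h | h
      · omega
      · omega
    · -- degree ≥ 3 case
      have hd3' : 3 ≤ d := by omega
      set Bad : Finset L := (Finset.Icc 1 (d/2)).biUnion
          (fun e => Finset.univ.filter fun x : L => x ^ q ^ e = x) with hBad
      have hBadlt : Bad.card < q ^ (d - 1) := by
        calc Bad.card
            ≤ ∑ e ∈ Finset.Icc 1 (d/2),
              (Finset.univ.filter fun x : L => x ^ q ^ e = x).card := Finset.card_biUnion_le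
          _ ≤ ∑ e ∈ Finset.Icc 1 (d/2), q ^ e := Finset.sum_le_sum fun e he =>
              hroots_bound e (by rw [Finset.mem_Icc] at he; omega)
          _ ≤ ∑ e ∈ Finset.range (d/2 + 1), q ^ e := Finset.sum_le_sum_of_subset
              (by intro e he; rw [Finset.mem_Icc] at he; rw [Finset.mem_range]; omega)
          _ < q ^ (d/2 + 1) := geom_lt' hq2 _
          _ ≤ q ^ (d - 1) := Nat.pow_le_pow_right (by omega) (by omega)
      have hex : ∃ α ∈ (Finset.univ.filter fun x : L => T x = -a), α ∉ Bad := by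
        by_contra hcon
        push_neg at hcon
        have h := Finset.card_le_card hcon
        rw [hfiber (-a)] at h
        omega
      obtain ⟨α, hαfib, hαBad⟩ := hex
      have hint : IsIntegral F α := IsIntegral.of_finite F α
      have hdvdd : (minpoly F α).natDegree ∣ d := by
        have h := minpoly_natDegree_dvd (F := F) α
        rwa [hfrL] at h
      have hpos := minpoly.natDegree_pos hint
      refine ⟨α, (Finset.mem_filter.mp hαfib).2, ?_⟩
      by_contra hne
      set e := (minpoly F α).natDegree with he
      have hle : e ≤ d / 2 := by
        obtain ⟨m, hm⟩ := hdvdd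
        have hm2 : 2 ≤ m := by
          by_contra hm1
          push_neg at hm1
          interval_cases m <;> simp_all <;> omega
        have : e * 2 ≤ e * m := Nat.mul_le_mul_left _ hm2
        omega
      apply hαBad
      rw [hBad, Finset.mem_biUnion]
      refine ⟨e, by rw [Finset.mem_Icc]; omega, ?_⟩
      rw [Finset.mem_filter]
      exact ⟨Finset.mem_univ _, pow_card_pow_minpoly α⟩
  -- conclude
  have hint : IsIntegral F α := IsIntegral.of_finite F α
  have htopα : F⟮α⟯ = ⊤ :=
    (Field.primitive_element_iff_minpoly_natDegree_eq F α).mpr (by rw [hαdeg, hfrL])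
  let pb := (IntermediateField.adjoin.powerBasis hint).map
    ((IntermediateField.equivOfEq htopα).trans IntermediateField.topEquiv)
  have hgen : pb.gen = α := by
    show ((IntermediateField.equivOfEq htopα).trans IntermediateField.topEquiv)
      (IntermediateField.adjoin.powerBasis hint).gen = α
    rw [IntermediateField.adjoin.powerBasis_gen]
    rfl
  have htr := PowerBasis.trace_gen_eq_nextCoeff_minpoly pb
  rw [hgen] at htr
  have hnext : (minpoly F α).nextCoeff = a := by
    have h := htr.symm.trans hαt
    exact neg_injective h
  exact ⟨minpoly F α, minpoly.monic hint, minpoly.irreducible hint, hαdeg, hnext⟩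

/-- A finset of given size avoiding `0` and negation. -/
private lemma two_ne_zero'' (F : Type*) [Field F] (p : ℕ) [Fact p.Prime] [CharP F p]
    (hp : p ≠ 2) : (2 : F) ≠ 0 := by
  have hp2 : ¬ (p ∣ 2) := by
    intro hdvd2
    exact hp ((Nat.prime_dvd_prime_iff_eq (Fact.out) Nat.prime_two).mp hdvd2)
  have hcast := (CharP.cast_eq_zero_iff F p 2).not.mpr hp2
  simpa using hcast

private lemma exists_neg_free (F : Type*) [Field F] [Fintype F]
    (p : ℕ) [Fact p.Prime] [CharP F p] (hp : p ≠ 2) :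
    ∀ (m : ℕ), 2 * m < Fintype.card F →
    ∃ s : Finset F, s.card = m ∧ (0 : F) ∉ s ∧ ∀ x ∈ s, -x ∉ s := by
  intro m
  induction m with
  | zero => exact fun _ => ⟨∅, by simp⟩
  | succ j ih =>
    intro hm
    obtain ⟨s, hcard, h0, hneg⟩ := ih (by omega)
    classical
    set t : Finset F := insert 0 (s ∪ s.image (fun x => -x)) with ht
    have htcard : t.card ≤ 2 * j + 1 := by
      calc t.card ≤ (s ∪ s.image fun x => -x).card + 1 := Finset.card_insert_le _ _
        _ ≤ s.card + (s.image fun x => -x).card + 1 := by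
            have := Finset.card_union_le s (s.image fun x => -x); omega
        _ ≤ 2 * j + 1 := by
            have := Finset.card_image_le (f := fun x : F => -x) (s := s); omega
    have hex : ∃ b : F, b ∉ t := by
      by_contra hcon
      push_neg at hcon
      have hsub : (Finset.univ : Finset F) ⊆ t := fun b _ => hcon b
      have := Finset.card_le_card hsub
      rw [Finset.card_univ] at this
      omega
    obtain ⟨b, hb⟩ := hex
    have hbs : b ∉ s := by
      intro h
      exact hb (by rw [ht]; exact Finset.mem_insert_of_mem (Finset.mem_union_left _ h))
    have hbimg : b ∉ s.image (fun x => -x) := by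
      intro h
      exact hb (by rw [ht]; exact Finset.mem_insert_of_mem (Finset.mem_union_right _ h))
    have hb0 : b ≠ 0 := fun h => hb (by rw [ht, h]; exact Finset.mem_insert_self _ _)
    refine ⟨insert b s, ?_, ?_, ?_⟩
    · rw [Finset.card_insert_of_notMem hbs, hcard]
    · intro h
      rcases Finset.mem_insert.mp h with h | h
      · exact hb0 h.symm
      · exact h0 h
    · intro x hx
      rcases Finset.mem_insert.mp hx with rfl | hxs
      · intro h
        rcases Finset.mem_insert.mp h with h | h
        · -- -x = x : then 2x = 0, so x = 0, contradiction
          apply hb0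
          have hxx : x + x = 0 := by linear_combination -h
          have h2 : (2 : F) * x = 0 := by rw [two_mul]; exact hxx
          exact (mul_eq_zero.mp h2).resolve_left (two_ne_zero'' F p hp)
        · exact hbimg (Finset.mem_image.mpr ⟨-x, h, neg_neg x⟩)
      · intro h
        rcases Finset.mem_insert.mp h with h | h
        · exact hbimg (Finset.mem_image.mpr ⟨x, hxs, h⟩)
        · exact hneg x hxs h

private lemma exists_inj_sum_zero (F : Type*) [Field F] [Fintype F]
    (p : ℕ) [Fact p.Prime] [CharP F p] (hp : p ≠ 2)
    (r : ℕ) (hr : r ≤ Fintype.card F) :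
    ∃ x : Fin r → F, Function.Injective x ∧ ∑ i, x i = 0 := by
  classical
  have hodd : Odd (Fintype.card F) := by
    obtain ⟨k, hpk, hcard⟩ := FiniteField.card F p
    rw [hcard]
    exact (hpk.odd_of_ne_two hp).pow
  have h2k : 2 * (r / 2) < Fintype.card F := by
    obtain ⟨m, hm⟩ := hodd
    omega
  obtain ⟨s, hcard, h0, hneg⟩ := exists_neg_free F p hp (r / 2) h2k
  set t0 : Finset F := s ∪ s.image (fun x => -x) with ht0
  have hdisj : Disjoint s (s.image fun x => -x) := by
    rw [Finset.disjoint_left]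
    intro y hy hyimg
    obtain ⟨z, hz, hzy⟩ := Finset.mem_image.mp hyimg
    exact hneg y hy (by rw [← hzy, neg_neg]; exact hz)
  have hcard_t0 : t0.card = 2 * (r / 2) := by
    rw [ht0, Finset.card_union_of_disjoint hdisj,
      Finset.card_image_of_injective _ neg_injective, hcard]
    ring
  have hsum_t0 : ∑ x ∈ t0, x = 0 := by
    rw [ht0, Finset.sum_union hdisj, Finset.sum_image (fun x _ y _ h => neg_injective h),
      ← Finset.sum_add_distrib]
    simp
  have h0t0 : (0 : F) ∉ t0 := by
    rw [ht0, Finset.mem_union]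
    rintro (h | h)
    · exact h0 h
    · obtain ⟨z, hz, hz0⟩ := Finset.mem_image.mp h
      rw [neg_eq_zero] at hz0
      exact h0 (hz0 ▸ hz)
  set t : Finset F := if Even r then t0 else insert 0 t0 with ht
  have hcard_t : t.card = r := by
    rw [ht]
    split_ifs with hev
    · obtain ⟨m, hm⟩ := hev
      rw [hcard_t0]
      omega
    · rw [Finset.card_insert_of_notMem h0t0, hcard_t0]
      rcases Nat.even_or_odd r with h | h
      · exact absurd h hev
      · obtain ⟨m, hm⟩ := h
        omega
  have hsum_t : ∑ x ∈ t, x = 0 := by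
    rw [ht]
    split_ifs
    · exact hsum_t0
    · rw [Finset.sum_insert h0t0, hsum_t0, add_zero]
  set e : Fin r ≃ {y // y ∈ t} := (finCongr hcard_t.symm).trans t.equivFin.symm with he
  refine ⟨fun i => (e i : F), ?_, ?_⟩
  · exact Subtype.val_injective.comp e.injective
  · rw [Equiv.sum_comp e (fun y : {y // y ∈ t} => (y : F))]
    rw [Finset.sum_coe_sort t (fun y => y)]
    exact hsum_t

/-- Existence of a regular residue datum: over a finite field of odd characteristic
with `q ≥ n(n-1)/2`, for every composition `n = n_1 + ⋯ + n_r` there is a monic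
squarefree polynomial of degree `n` which is a product of `r` pairwise distinct monic
irreducible polynomials of degrees `n_1, …, n_r` and whose `X^(n-1)`-coefficient
vanishes. -/
theorem stmt_12 (F : Type*) [Field F] [Fintype F]
    (p : ℕ) [Fact p.Prime] [CharP F p] (hp : p ≠ 2)
    (n : ℕ) (hq : n * (n - 1) / 2 ≤ Fintype.card F)
    (r : ℕ) (hr : 1 ≤ r) (N : Fin r → ℕ) (hNpos : ∀ i, 0 < N i)
    (hNsum : ∑ i, N i = n) :
    ∃ f : Polynomial F, f.Monic ∧ f.natDegree = n ∧
      (∃ g : Fin r → Polynomial F,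
        (∀ i, (g i).Monic ∧ Irreducible (g i) ∧ (g i).natDegree = N i) ∧
        Function.Injective g ∧ f = ∏ i, g i) ∧
      Squarefree f ∧ f.coeff (n - 1) = 0 := by
  classical
  have hq2 : 2 ≤ Fintype.card F := Fintype.one_lt_card
  have hrn : r ≤ n := by
    calc r = ∑ _i : Fin r, 1 := by simp
      _ ≤ ∑ i, N i := Finset.sum_le_sum fun i _ => hNpos i
      _ = n := hNsum
  have hn1 : 1 ≤ n := le_trans hr hrn
  have hnq : n ≤ Fintype.card F := by
    rcases Nat.lt_or_ge n 3 with h | h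
    · omega
    · have h1 : n ≤ n * (n - 1) / 2 := by
        rw [Nat.le_div_iff_mul_le (by omega)]
        have : n * 2 ≤ n * (n - 1) := Nat.mul_le_mul_left _ (by omega)
        omega
      omega
  obtain ⟨x, hxinj, hxsum⟩ := exists_inj_sum_zero F p hp r (le_trans hrn hnq)
  choose g hg using fun i => exists_irred F p hp (N i) (hNpos i) (x i)
  have hgmonic : ∀ i, (g i).Monic := fun i => (hg i).1
  have hgirr : ∀ i, Irreducible (g i) := fun i => (hg i).2.1
  have hgdeg : ∀ i, (g i).natDegree = N i := fun i => (hg i).2.2.1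
  have hgnext : ∀ i, (g i).nextCoeff = x i := fun i => (hg i).2.2.2
  have hginj : Function.Injective g := by
    intro i j hij
    apply hxinj
    rw [← hgnext i, ← hgnext j, hij]
  have hmonic : (∏ i, g i).Monic := monic_prod_of_monic _ _ fun i _ => hgmonic i
  have hdeg : (∏ i, g i).natDegree = n := by
    rw [Polynomial.natDegree_prod _ _ fun i _ => (hgmonic i).ne_zero]
    simp only [hgdeg]
    exact hNsum
  have hsep : (∏ i, g i).Separable := by
    apply Polynomial.separable_prod'
    · intro i _ j _ hij
      rw [(hgirr i).coprime_iff_not_dvd]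
      intro hdvd
      have hassoc := (hgirr i).associated_of_dvd (hgirr j) hdvd
      exact hij (hginj (Polynomial.eq_of_monic_of_associated (hgmonic i) (hgmonic j) hassoc))
    · intro i _
      exact PerfectField.separable_of_irreducible (hgirr i)
  refine ⟨∏ i, g i, hmonic, hdeg, ⟨g, fun i => ⟨hgmonic i, hgirr i, hgdeg i⟩, hginj, rfl⟩,
    hsep.squarefree, ?_⟩
  have hnext : (∏ i, g i).nextCoeff = 0 := by
    rw [Polynomial.Monic.nextCoeff_prod _ _ fun i _ => hgmonic i]
    simp only [hgnext]
    exact hxsum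
  rw [← hnext, Polynomial.nextCoeff_of_natDegree_pos (by omega), hdeg]
end

section
/- Let k be a field and b ∈ M_n(k) an upper triangular matrix that is diagonalizable over k. Then there exists an invertible upper triangular matrix u ∈ GL_n(k) such that u^{−1} b u is diagonal (with the same diagonal entries as b, in the same order). -/
open Polynomial Matrix Finset

section Aux

variable {k : Type*} [Field k] {n : ℕ}

lemma aux_aeval_diagonal (d : Fin n → k) (f : k[X]) :
    aeval (Matrix.diagonal d) f = Matrix.diagonal fun i => f.eval (d i) := by
  induction f using Polynomial.induction_on' with
  | add p q hp hq => simp [hp, hq, ← Matrix.diagonal_add]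
  | monomial m a =>
      rw [aeval_monomial, Matrix.algebraMap_eq_diagonal, Matrix.diagonal_pow,
        Matrix.diagonal_mul_diagonal]
      funext i
      simp [eval_monomial]

lemma aux_aeval_conj {P Q A : Matrix (Fin n) (Fin n) k} (h1 : P * Q = 1) (h2 : Q * P = 1)
    (f : k[X]) : aeval (P * A * Q) f = P * aeval A f * Q := by
  have hpow : ∀ m : ℕ, (P * A * Q) ^ m = P * A ^ m * Q := by
    intro m
    induction m with
    | zero => simpa using h1.symm
    | succ m ih =>
        have hmid : P * A ^ m * Q * (P * A * Q) = P * (A ^ m * ((Q * P) * (A * Q))) := by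
          simp only [mul_assoc]
        rw [pow_succ, ih, hmid, h2, one_mul]
        simp only [pow_succ, mul_assoc]
  induction f using Polynomial.induction_on' with
  | add p q hp hq => simp [hp, hq, mul_add, add_mul]
  | monomial m a =>
      rw [aeval_monomial, aeval_monomial, hpow]
      simp only [← mul_assoc]
      rw [Algebra.commutes]

lemma aux_aeval_triangular {b : Matrix (Fin n) (Fin n) k} (hb : b.BlockTriangular id)
    (f : k[X]) : (aeval b f).BlockTriangular id := by
  induction f using Polynomial.induction_on' with
  | add p q hp hq => simpa [map_add] using hp.add hq
  | monomial m a =>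
      have hpow : ∀ m : ℕ, (b ^ m).BlockTriangular id := by
        intro m
        induction m with
        | zero => simpa using Matrix.blockTriangular_one
        | succ m ih => rw [pow_succ]; exact ih.mul hb
      rw [aeval_monomial, Matrix.algebraMap_eq_diagonal]
      exact (Matrix.blockTriangular_diagonal _).mul (hpow m)

lemma aux_X_sub_C_mul_basis [DecidableEq k] {s : Finset k} {x : k} (hx : x ∈ s) :
    (X - C x) * Lagrange.basis s id x
      = C (Lagrange.nodalWeight s id x) * Lagrange.nodal s id := by
  have hbasis : Lagrange.basis s id x
      = C (Lagrange.nodalWeight s id x) * Lagrange.nodal (s.erase x) id := by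
    simp_rw [Lagrange.basis, Lagrange.basisDivisor, Lagrange.nodalWeight, Lagrange.nodal,
      Finset.prod_mul_distrib, map_prod]
  rw [hbasis, Lagrange.nodal_eq_mul_nodal_erase hx]
  simp only [id_eq]
  ring

end Aux

/-- A diagonalizable upper triangular matrix can be conjugated to a diagonal matrix
(with the same diagonal, in the same order) by an invertible upper triangular
matrix. -/
theorem stmt_15 (k : Type*) [Field k] (n : ℕ) (b : Matrix (Fin n) (Fin n) k)
    (hb : ∀ i j, j < i → b i j = 0)
    (hdiag : ∃ P : (Matrix (Fin n) (Fin n) k)ˣ, ∃ d : Fin n → k,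
      (↑P⁻¹ : Matrix (Fin n) (Fin n) k) * b * (↑P : Matrix (Fin n) (Fin n) k)
        = Matrix.diagonal d) :
    ∃ u : (Matrix (Fin n) (Fin n) k)ˣ,
      (∀ i j, j < i → (↑u : Matrix (Fin n) (Fin n) k) i j = 0) ∧
      (↑u⁻¹ : Matrix (Fin n) (Fin n) k) * b * (↑u : Matrix (Fin n) (Fin n) k)
        = Matrix.diagonal (fun i => b i i) := by
  classical
  rcases Nat.eq_zero_or_pos n with hn | hn
  · subst hn
    exact ⟨1, fun i j h => i.elim0, Subsingleton.elim _ _⟩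
  obtain ⟨P, d, hP⟩ := hdiag
  have hb' : b.BlockTriangular id := fun i j h => hb i j h
  set S : Finset k := Finset.univ.image d with hS
  have hSne : S.Nonempty := ⟨d ⟨0, hn⟩, Finset.mem_image_of_mem _ (Finset.mem_univ _)⟩
  have hbP : b = (↑P : Matrix (Fin n) (Fin n) k) * Matrix.diagonal d
      * (↑P⁻¹ : Matrix (Fin n) (Fin n) k) := by
    calc b = ((↑P : Matrix (Fin n) (Fin n) k) * ↑P⁻¹) * b
            * ((↑P : Matrix (Fin n) (Fin n) k) * ↑P⁻¹) := by
            rw [P.mul_inv]; simp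
    _ = (↑P : Matrix (Fin n) (Fin n) k)
          * ((↑P⁻¹ : Matrix (Fin n) (Fin n) k) * b * ↑P) * ↑P⁻¹ := by
            simp only [mul_assoc]
    _ = (↑P : Matrix (Fin n) (Fin n) k) * Matrix.diagonal d * ↑P⁻¹ := by rw [hP]
  -- nodal polynomial annihilates b
  have hnodal : aeval b (Lagrange.nodal S id) = 0 := by
    rw [hbP, aux_aeval_conj P.mul_inv P.inv_mul, aux_aeval_diagonal]
    have hz : (fun i => (Lagrange.nodal S id).eval (d i)) = fun _ => (0 : k) := by
      funext i
      have hdi : d i ∈ S := Finset.mem_image_of_mem _ (Finset.mem_univ _)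
      simpa using Lagrange.eval_nodal_at_node (i := d i) (v := (id : k → k)) hdi
    rw [hz]
    simp
  have htri : ∀ x : k, (aeval b (Lagrange.basis S id x)).BlockTriangular id :=
    fun x => aux_aeval_triangular hb' _
  -- eigen equation
  have heig : ∀ x ∈ S, b * aeval b (Lagrange.basis S id x)
      = x • aeval b (Lagrange.basis S id x) := by
    intro x hx
    have h0 : aeval b ((X - C x) * Lagrange.basis S id x) = 0 := by
      rw [aux_X_sub_C_mul_basis hx, _root_.map_mul, hnodal, mul_zero]
    rw [_root_.map_mul, map_sub, aeval_X, aeval_C, sub_mul] at h0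
    have h1 := sub_eq_zero.mp h0
    rw [h1, ← Algebra.smul_def]
  -- diagonal entries of the eigenprojections
  have hdiagentry : ∀ x ∈ S, ∀ j : Fin n, x ≠ b j j
      → (aeval b (Lagrange.basis S id x)) j j = 0 := by
    intro x hx j hne
    set A := aeval b (Lagrange.basis S id x) with hA
    have hAt : A.BlockTriangular id := htri x
    have h1 : (b * A) j j = b j j * A j j := by
      rw [Matrix.mul_apply]
      refine Finset.sum_eq_single j (fun l _ hl => ?_) (fun h => absurd (Finset.mem_univ j) h)
      rcases lt_or_gt_of_ne hl with h | h
      · rw [hb j l h, zero_mul]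
      · rw [hAt h, mul_zero]
    have h2 : (b * A) j j = x * A j j := by
      rw [heig x hx]
      simp [hA]
    have h3 : (x - b j j) * A j j = 0 := by
      rw [sub_mul, ← h2, h1, sub_self]
    rcases mul_eq_zero.mp h3 with h | h
    · exact absurd (sub_eq_zero.mp h) hne
    · exact h
  -- sum of eigenprojections is 1
  have hsum : ∑ x ∈ S, aeval b (Lagrange.basis S id x) = 1 := by
    rw [← map_sum, Lagrange.sum_basis Function.injective_id.injOn hSne, _root_.map_one]
  have hsumjj : ∀ j : Fin n, ∑ x ∈ S, (aeval b (Lagrange.basis S id x)) j j = 1 := by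
    intro j
    have := congrArg (fun M : Matrix (Fin n) (Fin n) k => M j j) hsum
    simpa [Matrix.sum_apply, Matrix.one_apply] using this
  -- diagonal entries of b are in S
  have hmem : ∀ j : Fin n, b j j ∈ S := by
    intro j
    by_contra hmemj
    have hz : ∀ x ∈ S, (aeval b (Lagrange.basis S id x)) j j = 0 := by
      intro x hx
      exact hdiagentry x hx j (by rintro rfl; exact hmemj hx)
    have h4 := hsumjj j
    rw [Finset.sum_eq_zero hz] at h4
    exact one_ne_zero h4.symm
  have hqdiag : ∀ j : Fin n, (aeval b (Lagrange.basis S id (b j j))) j j = 1 := by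
    intro j
    have h5 := hsumjj j
    rwa [Finset.sum_eq_single_of_mem (b j j) (hmem j)
      (fun x hx hne => hdiagentry x hx j hne)] at h5
  -- the conjugating matrix
  set U : Matrix (Fin n) (Fin n) k :=
    Matrix.of (fun i j => (aeval b (Lagrange.basis S id (b j j))) i j) with hU
  have hUtri : U.BlockTriangular id := fun i j h => htri (b j j) h
  have hUdet : U.det = 1 := by
    rw [Matrix.det_of_upperTriangular hUtri]
    exact Finset.prod_eq_one fun j _ => hqdiag j
  have hUunit : IsUnit U := by
    rw [Matrix.isUnit_iff_isUnit_det, hUdet]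
    exact isUnit_one
  obtain ⟨u, hu⟩ := hUunit
  have hcomm : b * U = U * Matrix.diagonal (fun i => b i i) := by
    ext i j
    have hcol : (b * U) i j = (b * aeval b (Lagrange.basis S id (b j j))) i j := rfl
    rw [hcol, heig (b j j) (hmem j), Matrix.mul_diagonal]
    simp [hU, mul_comm]
  refine ⟨u, fun i j h => ?_, ?_⟩
  · rw [hu]; exact hUtri h
  · rw [hu, mul_assoc, hcomm, ← mul_assoc, ← hu, ← Units.val_mul, inv_mul_cancel,
      Units.val_one, one_mul]
end
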